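/- Let m be an integer with m < n. If there exists a basis a ∈ PB of the integer polymatroid P with internal activity ι(a) = m, then there also exists a basis b ∈ PB with internal activity ι(b) = m + 1. -/

import Mathlib

open Finset

variable {n : ℕ}

/-- The set of bases of the integer polymatroid with rank function `f` on ground set `Fin n`:
integer vectors `a` with `a i ≥ 0`, `∑_{i ∈ I} a i ≤ f I` for every `I`, and `∑ i, a i = f [n]`.
(The upper bound `a i ≤ f {i}` used for the ambient finite set is implied by the constraints.) -/
noncomputable def PB (n : ℕ) (f : Finset (Fin n) → ℕ) : Finset (Fin n → ℤ) :=
  (Fintype.piFinset fun i : Fin n => Finset.Icc (0 : ℤ) (f {i})).filter fun a =>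
    (∀ I : Finset (Fin n), ∑ j ∈ I, a j ≤ (f I : ℤ)) ∧ ∑ j, a j = (f Finset.univ : ℤ)

/-- A set `I` is tight for `a` if `∑_{i ∈ I} a i = f I`. -/
def Tight (f : Finset (Fin n) → ℕ) (a : Fin n → ℤ) (I : Finset (Fin n)) : Prop :=
  ∑ i ∈ I, a i = (f I : ℤ)

/-- `i` is internally active with respect to `a`: `a - e_i + e_j ∉ PB` for every `j < i`. -/
def IntAct (f : Finset (Fin n) → ℕ) (a : Fin n → ℤ) (i : Fin n) : Prop :=
  ∀ j : Fin n, j < i → a - Pi.single i 1 + Pi.single j 1 ∉ PB n f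

/-- `i` is externally active with respect to `a`: `a + e_i - e_j ∉ PB` for every `j < i`. -/
def ExtAct (f : Finset (Fin n) → ℕ) (a : Fin n → ℤ) (i : Fin n) : Prop :=
  ∀ j : Fin n, j < i → a + Pi.single i 1 - Pi.single j 1 ∉ PB n f

open scoped Classical in
/-- `Int(a)`: the set of internally active indices. -/
noncomputable def IntSet (f : Finset (Fin n) → ℕ) (a : Fin n → ℤ) : Finset (Fin n) :=
  Finset.univ.filter fun i => IntAct f a i

open scoped Classical in
/-- `Ext(a)`: the set of externally active indices. -/
noncomputable def ExtSet (f : Finset (Fin n) → ℕ) (a : Fin n → ℤ) : Finset (Fin n) :=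
  Finset.univ.filter fun i => ExtAct f a i

/-- `ι(a) = |Int(a)|`, the internal activity. -/
noncomputable def iota (f : Finset (Fin n) → ℕ) (a : Fin n → ℤ) : ℕ := (IntSet f a).card

/-- `ε(a) = |Ext(a)|`, the external activity. -/
noncomputable def eps (f : Finset (Fin n) → ℕ) (a : Fin n → ℤ) : ℕ := (ExtSet f a).card

/-!
Starting from a basis with `ι = m`, repeatedly perform the lexicographically smallest feasible
exchange `a ↦ a - e_{i₀} + e_{j₀}` with `j₀ < i₀`. By submodularity (uncrossing tight sets),
every index other than `i₀` that is not internally active for `a` stays inactive, so `ι` grows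
by at most one per step, while the weight `∑ i · a_i` strictly decreases. Such an exchange
exists as long as some index is inactive, i.e. while `ι < n`; the walk therefore can neither
stop below `m + 1` nor jump over it.
-/

theorem exists_eq_add_one_of_descent {α : Type*} {P : α → Prop} (ι φ : α → ℕ) {m : ℕ}
    (hstep : ∀ a, P a → ι a ≤ m → ∃ b, P b ∧ ι b ≤ ι a + 1 ∧ φ b < φ a) :
    ∀ a, P a → ι a ≤ m + 1 → ∃ b, P b ∧ ι b = m + 1 := by
  intro a
  induction a using (measure φ).wf.induction with
  | h a ih =>
    intro ha hle
    rcases hle.eq_or_lt with heq | hlt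
    · exact ⟨a, ha, heq⟩
    · obtain ⟨b, hb, hιb, hφb⟩ := hstep a ha (by omega)
      exact ih b hφb hb (by omega)

theorem exists_lexMin {ι : Type*} [LinearOrder ι] [WellFoundedLT ι] {p : ι → ι → Prop}
    (h : ∃ j i, p j i) :
    ∃ j₀ i₀, p j₀ i₀ ∧ (∀ j i, p j i → j₀ ≤ j) ∧ ∀ i, p j₀ i → i₀ ≤ i := by
  obtain ⟨j₀, ⟨i, hi⟩, hj₀⟩ := wellFounded_lt.has_min {j | ∃ i, p j i} h
  obtain ⟨i₀, hi₀, hi₀min⟩ := wellFounded_lt.has_min {i | p j₀ i} ⟨i, hi⟩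
  exact ⟨j₀, i₀, hi₀, fun j i hji => not_lt.1 (hj₀ j ⟨i, hji⟩),
    fun i hi => not_lt.1 (hi₀min i hi)⟩

def weight (a : Fin n → ℤ) : ℤ := ∑ x : Fin n, (x : ℤ) * a x

def Submodular (f : Finset (Fin n) → ℕ) : Prop :=
  ∀ I J : Finset (Fin n), f (I ∪ J) + f (I ∩ J) ≤ f I + f J

section Exchange

variable {f : Finset (Fin n) → ℕ} {a : Fin n → ℤ}

theorem mem_PB_iff : a ∈ PB n f ↔ (∀ i, 0 ≤ a i) ∧
    (∀ I : Finset (Fin n), ∑ j ∈ I, a j ≤ (f I : ℤ)) ∧ ∑ j, a j = (f univ : ℤ) := by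
  simp only [PB, mem_filter, Fintype.mem_piFinset, mem_Icc]
  refine ⟨fun ⟨h, hI, hU⟩ => ⟨fun i => (h i).1, hI, hU⟩,
    fun ⟨h, hI, hU⟩ => ⟨fun i => ⟨h i, by simpa using hI {i}⟩, hI, hU⟩⟩

theorem sum_sub_single_add_single (a : Fin n → ℤ) (i j : Fin n) (I : Finset (Fin n)) :
    ∑ x ∈ I, (a - Pi.single i 1 + Pi.single j 1 : Fin n → ℤ) x
      = ∑ x ∈ I, a x - (if i ∈ I then 1 else 0) + (if j ∈ I then 1 else 0) := by
  simp only [Pi.add_apply, Pi.sub_apply, sum_add_distrib, sum_sub_distrib, Pi.single_apply,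
    sum_ite_eq']

theorem exchange_mem_PB_iff (ha : a ∈ PB n f) {i j : Fin n} (hij : i ≠ j) :
    a - Pi.single i 1 + Pi.single j 1 ∈ PB n f ↔
      1 ≤ a i ∧ ∀ I : Finset (Fin n), j ∈ I → i ∉ I → ∑ x ∈ I, a x < (f I : ℤ) := by
  obtain ⟨ha0, haI, haU⟩ := mem_PB_iff.1 ha
  rw [mem_PB_iff]
  simp only [sum_sub_single_add_single, mem_univ, if_true]
  constructor
  · rintro ⟨h0, hI, -⟩
    refine ⟨by simpa [Pi.single_apply, hij] using h0 i, fun I hjI hiI => ?_⟩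
    have := hI I
    simp only [hjI, hiI, if_true, if_false] at this
    omega
  · rintro ⟨hai, hI⟩
    refine ⟨fun x => ?_, fun I => ?_, by omega⟩
    · have := ha0 x
      simp only [Pi.add_apply, Pi.sub_apply, Pi.single_apply]
      split_ifs <;> subst_vars <;> omega
    · have := haI I
      by_cases hiI : i ∈ I <;> by_cases hjI : j ∈ I <;> simp only [hiI, hjI, if_true, if_false]
      all_goals first | omega | have := hI I hjI hiI; omega

theorem weight_exchange (a : Fin n → ℤ) (i j : Fin n) :
    weight (a - Pi.single i 1 + Pi.single j 1) = weight a - i + j := by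
  simp [weight, mul_sub, mul_add, sum_add_distrib, sum_sub_distrib, Pi.single_apply]

theorem weight_nonneg (ha : a ∈ PB n f) : 0 ≤ weight a :=
  sum_nonneg fun x _ => mul_nonneg (Int.natCast_nonneg _) ((mem_PB_iff.1 ha).1 x)

theorem tight_union_or_tight_inter
    (hsub : Submodular f) (ha : a ∈ PB n f)
    {S T : Finset (Fin n)} (h : (f S : ℤ) + f T ≤ ∑ x ∈ S, a x + ∑ x ∈ T, a x + 1) :
    Tight f a (S ∪ T) ∨ Tight f a (S ∩ T) := by
  have hU := (mem_PB_iff.1 ha).2.1 (S ∪ T)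
  have hI := (mem_PB_iff.1 ha).2.1 (S ∩ T)
  have hsum : ∑ x ∈ S ∪ T, a x + ∑ x ∈ S ∩ T, a x = ∑ x ∈ S, a x + ∑ x ∈ T, a x :=
    sum_union_inter
  have hf : (f (S ∪ T) : ℤ) + f (S ∩ T) ≤ f S + f T := mod_cast hsub S T
  unfold Tight
  omega

theorem exchange_mem_PB_of_slack_one
    (hsub : Submodular f) (ha : a ∈ PB n f)
    {i₀ j₀ k l : Fin n} (hi₀j₀ : i₀ ≠ j₀) (hkj₀ : k ≠ j₀) (hkl : k ≠ l)
    (hi₀ : a - Pi.single i₀ 1 + Pi.single j₀ 1 ∈ PB n f)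
    (hk : a - Pi.single k 1 + Pi.single l 1 ∈ PB n f)
    {T : Finset (Fin n)} (hlT : l ∈ T) (hkT : k ∉ T) (hj₀T : j₀ ∈ T) (hi₀T : i₀ ∉ T)
    (hT : ∑ x ∈ T, a x + 1 = f T) :
    a - Pi.single k 1 + Pi.single j₀ 1 ∈ PB n f := by
  have hj₀ := ((exchange_mem_PB_iff ha hi₀j₀).1 hi₀).2
  obtain ⟨hak, hl⟩ := (exchange_mem_PB_iff ha hkl).1 hk
  refine (exchange_mem_PB_iff ha hkj₀).2 ⟨hak, fun S hj₀S hkS => ?_⟩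
  refine lt_of_le_of_ne ((mem_PB_iff.1 ha).2.1 S) fun hS => ?_
  rcases tight_union_or_tight_inter hsub ha (S := S) (T := T) (by omega) with hU | hI
  · exact (hl _ (mem_union_right S hlT) (by simp [hkS, hkT])).ne hU
  · exact (hj₀ _ (mem_inter.2 ⟨hj₀S, hj₀T⟩) fun h => hi₀T (mem_inter.1 h).2).ne hI

theorem not_intAct_exchange_of_lexMin
    (hsub : Submodular f) (ha : a ∈ PB n f)
    {i₀ j₀ : Fin n} (hj₀i₀ : j₀ < i₀) (hb : a - Pi.single i₀ 1 + Pi.single j₀ 1 ∈ PB n f)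
    (hj₀min : ∀ j i, j < i → a - Pi.single i 1 + Pi.single j 1 ∈ PB n f → j₀ ≤ j)
    (hi₀min : ∀ i, j₀ < i → a - Pi.single i 1 + Pi.single j₀ 1 ∈ PB n f → i₀ ≤ i)
    {k : Fin n} (hki₀ : k ≠ i₀) (hk : ¬ IntAct f a k) :
    ¬ IntAct f (a - Pi.single i₀ 1 + Pi.single j₀ 1) k := by
  simp only [IntAct, not_forall, not_not, exists_prop] at hk ⊢
  obtain ⟨l, hlk, hkl⟩ := hk
  by_cases hbl : a - Pi.single i₀ 1 + Pi.single j₀ 1 - Pi.single k 1 + Pi.single l 1 ∈ PB n f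
  · exact ⟨l, hlk, hbl⟩
  have hj₀k : j₀ < k := (hj₀min l k hlk hkl).trans_lt hlk
  obtain ⟨hak, hl⟩ := (exchange_mem_PB_iff ha hlk.ne').1 hkl
  have hbk : (a - Pi.single i₀ 1 + Pi.single j₀ 1 : Fin n → ℤ) k = a k := by simp [hki₀, hj₀k.ne']
  rw [exchange_mem_PB_iff hb hlk.ne', hbk] at hbl
  push Not at hbl
  obtain ⟨T, hlT, hkT, hbT⟩ := hbl hak
  have haT := hl T hlT hkT
  have hTb := (mem_PB_iff.1 hb).2.1 T
  rw [sum_sub_single_add_single] at hbT hTb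
  have hsep : j₀ ∈ T ∧ i₀ ∉ T := by
    by_cases hi₀T : i₀ ∈ T <;> by_cases hj₀T : j₀ ∈ T <;>
      simp only [hi₀T, hj₀T, if_true, if_false, not_true_eq_false, not_false_eq_true, and_true,
        and_false] at hbT ⊢ <;> omega
  -- `T` separates `{l, j₀}` from `{k, i₀}` with slack one, so uncrossing with `T` makes
  -- `k → j₀` feasible for `a`; that is the exchange `k → i₀` for the new basis.
  have hkj₀ : a - Pi.single k 1 + Pi.single j₀ 1 ∈ PB n f := by
    refine exchange_mem_PB_of_slack_one hsub ha hj₀i₀.ne' hj₀k.ne' hlk.ne' hb hkl hlT hkT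
      hsep.1 hsep.2 ?_
    simp only [hsep.1, hsep.2] at hbT
    omega
  refine ⟨i₀, lt_of_le_of_ne (hi₀min k hj₀k hkj₀) hki₀.symm, ?_⟩
  convert hkj₀ using 1
  abel

theorem exists_not_intAct_of_iota_lt (h : iota f a < n) : ∃ i, ¬ IntAct f a i := by
  by_contra! hall
  have : IntSet f a = univ := eq_univ_of_forall fun i => by simp [IntSet, hall i]
  simp [iota, this] at h

theorem exists_exchange_iota_le_succ
    (hsub : Submodular f) (ha : a ∈ PB n f)
    (h : ∃ i, ¬ IntAct f a i) :
    ∃ b ∈ PB n f, iota f b ≤ iota f a + 1 ∧ weight b < weight a := by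
  obtain ⟨i, hi⟩ := h
  simp only [IntAct, not_forall, not_not, exists_prop] at hi
  obtain ⟨j, hji, hj⟩ := hi
  obtain ⟨j₀, i₀, ⟨hj₀i₀, hb⟩, hj₀min, hi₀min⟩ :=
    exists_lexMin (p := fun j i => j < i ∧ a - Pi.single i 1 + Pi.single j 1 ∈ PB n f)
      ⟨j, i, hji, hj⟩
  refine ⟨_, hb, ?_, ?_⟩
  · have hsubset : IntSet f (a - Pi.single i₀ 1 + Pi.single j₀ 1) ⊆ insert i₀ (IntSet f a) := by
      intro k hk
      by_contra! hki
      simp only [IntSet, mem_insert, mem_filter, mem_univ, true_and, not_or] at hk hki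
      exact not_intAct_exchange_of_lexMin hsub ha hj₀i₀ hb
        (fun j i hji hj => hj₀min j i ⟨hji, hj⟩) (fun i hi hj => hi₀min i ⟨hi, hj⟩) hki.1 hki.2 hk
    exact (card_le_card hsubset).trans (card_insert_le _ _)
  · have : (j₀ : ℤ) < i₀ := mod_cast hj₀i₀
    rw [weight_exchange]
    omega

end Exchange

theorem exists_basis_internal_activity_succ_general
    (n : ℕ) (f : Finset (Fin n) → ℕ)
    (hsub : ∀ I J : Finset (Fin n), f (I ∪ J) + f (I ∩ J) ≤ f I + f J)
    (m : ℕ) (hm : m < n)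
    (hex : ∃ a ∈ PB n f, iota f a = m) :
    ∃ b ∈ PB n f, iota f b = m + 1 := by
  obtain ⟨a, ha, rfl⟩ := hex
  refine exists_eq_add_one_of_descent (P := (· ∈ PB n f)) (iota f) (fun b => (weight b).toNat)
    (fun b hb hbm => ?_) a ha (Nat.le_succ _)
  obtain ⟨c, hc, hιc, hwc⟩ :=
    exists_exchange_iota_le_succ hsub hb (exists_not_intAct_of_iota_lt (hbm.trans_lt hm))
  exact ⟨c, hc, hιc, by have := weight_nonneg hc; omega⟩

/-- If some basis has internal activity `m < n`, then some basis has internal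
activity `m + 1`. -/
theorem exists_basis_internal_activity_succ
    (n : ℕ) (hn : 0 < n) (f : Finset (Fin n) → ℕ)
    (hf0 : f ∅ = 0)
    (hmono : ∀ I J : Finset (Fin n), I ⊆ J → f I ≤ f J)
    (hsub : ∀ I J : Finset (Fin n), f (I ∪ J) + f (I ∩ J) ≤ f I + f J)
    (m : ℕ) (hm : m < n)
    (hex : ∃ a ∈ PB n f, iota f a = m) :
    ∃ b ∈ PB n f, iota f b = m + 1 :=
  exists_basis_internal_activity_succ_general n f hsub m hm hex
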